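/- Let λ > 0 and f, g ∈ 𝒳^k, and consider ℰ(x) = Σ_{i=1}^k [ d_𝒳(g^{(i)},x^{(i)})² + λ d_𝒳(f^{(i)},x^{(i)})² ] for x ∈ 𝒳^k. Then x̂ defined componentwise by x̂^{(i)} = ( (g^{(i)} + λ f^{(i)})/(1+λ) + (λ/(1+λ)) · 2π v^{(i)} )_𝒳 is a minimizer of ℰ, where v^{(i)}_j = 0 for linear components j > m, v^{(i)}_j = 0 if j ≤ m and |g^{(i)}_j − f^{(i)}_j| ≤ π, and v^{(i)}_j = sgn(g^{(i)}_j − f^{(i)}_j) if j ≤ m and |g^{(i)}_j − f^{(i)}_j| > π; moreover x̂ is the unique minimizer when |g^{(i)}_j − f^{(i)}_j| ≠ π for all i and all cyclic components j ≤ m. -/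
import Mathlib


open scoped Classical

noncomputable section

/-- `(t)_{2π}`: the unique element of `[-π, π)` with `t - (t)_{2π} ∈ 2πℤ`. -/
def wrap (t : ℝ) : ℝ := t - 2 * Real.pi * (⌊(t + Real.pi) / (2 * Real.pi)⌋ : ℤ)

/-- A point of `𝒳 = (𝕊¹)^m × ℝⁿ`, identified with `[-π,π)^m × ℝⁿ`. -/
abbrev Pt (m n : ℕ) := (Fin m → ℝ) × (Fin n → ℝ)

/-- Distance on `𝒳`. -/
def dX {m n : ℕ} (x y : Pt m n) : ℝ :=
  Real.sqrt ((∑ i, (wrap (x.1 i - y.1 i)) ^ 2) + ∑ i, (x.2 i - y.2 i) ^ 2)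

lemma two_pi_pos : (0:ℝ) < 2 * Real.pi := by positivity

lemma wrap_mem_Ico (t : ℝ) : wrap t ∈ Set.Ico (-Real.pi) Real.pi := by
  have h2 := two_pi_pos
  have h1 := Int.floor_le ((t + Real.pi) / (2 * Real.pi))
  have h3 := Int.lt_floor_add_one ((t + Real.pi) / (2 * Real.pi))
  rw [le_div_iff₀ h2] at h1
  rw [div_lt_iff₀ h2] at h3
  constructor
  · unfold wrap; nlinarith
  · unfold wrap; nlinarith

lemma wrap_sub_exists (t : ℝ) : ∃ d : ℤ, t - wrap t = 2 * Real.pi * d :=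
  ⟨⌊(t + Real.pi) / (2 * Real.pi)⌋, by unfold wrap; ring⟩

lemma wrap_eq_self {t : ℝ} (h : t ∈ Set.Ico (-Real.pi) Real.pi) : wrap t = t := by
  have h2 := two_pi_pos
  have : ⌊(t + Real.pi) / (2 * Real.pi)⌋ = 0 := by
    apply Int.floor_eq_zero_iff.mpr
    constructor
    · rw [le_div_iff₀ h2]; linarith [h.1]
    · rw [div_lt_iff₀ h2]; linarith [h.2]
  unfold wrap; rw [this]; push_cast; ring

lemma wrap_add_int (t : ℝ) (d : ℤ) : wrap (t + 2 * Real.pi * d) = wrap t := by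
  have h2 : (2 * Real.pi) ≠ 0 := ne_of_gt two_pi_pos
  unfold wrap
  have : (t + 2 * Real.pi * d + Real.pi) / (2 * Real.pi) = (t + Real.pi) / (2 * Real.pi) + d := by
    field_simp; ring
  rw [this, Int.floor_add_intCast]
  push_cast; ring

lemma sq_le_sq_shift {w : ℝ} (hw : |w| ≤ Real.pi) (d : ℤ) :
    w ^ 2 ≤ (w + 2 * Real.pi * d) ^ 2 := by
  rcases eq_or_ne d 0 with h | h
  · simp [h]
  · have hd : (1:ℝ) ≤ |(d:ℝ)| := by exact_mod_cast Int.one_le_abs h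
    have habs : 2 * Real.pi * |(d:ℝ)| - |w| ≤ |w + 2 * Real.pi * d| := by
      have := abs_sub_abs_le_abs_sub (2 * Real.pi * d) (-w)
      rw [abs_neg, sub_neg_eq_add, abs_mul, abs_of_pos two_pi_pos,
        add_comm (2 * Real.pi * (d:ℝ)) w] at this
      linarith
    have hpi : Real.pi ≤ |w + 2 * Real.pi * d| := by
      nlinarith [Real.pi_pos]
    calc w ^ 2 ≤ Real.pi ^ 2 := by nlinarith [abs_nonneg w, sq_abs w]
      _ ≤ |w + 2 * Real.pi * d| ^ 2 := by nlinarith [Real.pi_pos]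
      _ = (w + 2 * Real.pi * d) ^ 2 := sq_abs _

lemma sq_lt_sq_shift {w : ℝ} (hw : |w| < Real.pi) {d : ℤ} (hd0 : d ≠ 0) :
    w ^ 2 < (w + 2 * Real.pi * d) ^ 2 := by
  have hd : (1:ℝ) ≤ |(d:ℝ)| := by exact_mod_cast Int.one_le_abs hd0
  have habs : 2 * Real.pi * |(d:ℝ)| - |w| ≤ |w + 2 * Real.pi * d| := by
    have := abs_sub_abs_le_abs_sub (2 * Real.pi * d) (-w)
    rw [abs_neg, sub_neg_eq_add, abs_mul, abs_of_pos two_pi_pos,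
      add_comm (2 * Real.pi * (d:ℝ)) w] at this
    linarith
  have hpi : Real.pi ≤ |w + 2 * Real.pi * d| := by
    nlinarith [Real.pi_pos]
  calc w ^ 2 < Real.pi ^ 2 := by nlinarith [abs_nonneg w, sq_abs w]
    _ ≤ |w + 2 * Real.pi * d| ^ 2 := by nlinarith [Real.pi_pos]
    _ = (w + 2 * Real.pi * d) ^ 2 := sq_abs _

lemma eq_of_Ico_sub_int {x y : ℝ} (hx : x ∈ Set.Ico (-Real.pi) Real.pi)
    (hy : y ∈ Set.Ico (-Real.pi) Real.pi) (d : ℤ) (h : x - y = 2 * Real.pi * d) :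
    x = y := by
  have hpi := Real.pi_pos
  have hd : d = 0 := by
    by_contra h0
    have h1 : (1:ℝ) ≤ |(d:ℝ)| := by exact_mod_cast Int.one_le_abs h0
    have : |x - y| < 2 * Real.pi := by
      rw [abs_sub_lt_iff]; constructor <;> linarith [hx.1, hx.2, hy.1, hy.2]
    rw [h, abs_mul, abs_of_pos two_pi_pos] at this
    nlinarith
  rw [hd] at h; push_cast at h; linarith

set_option maxHeartbeats 1000000 in
lemma cyclic1D (lam : ℝ) (hlam : 0 < lam) (G F : ℝ)
    (hG : G ∈ Set.Ico (-Real.pi) Real.pi) (hF : F ∈ Set.Ico (-Real.pi) Real.pi)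
    (V : ℝ) (hV : V = if |G - F| ≤ Real.pi then 0 else Real.sign (G - F))
    (xh : ℝ)
    (hxh : xh = wrap ((G + lam * F) / (1 + lam) + lam / (1 + lam) * (2 * Real.pi) * V)) :
    (∀ x ∈ Set.Ico (-Real.pi) Real.pi,
      wrap (G - xh) ^ 2 + lam * wrap (F - xh) ^ 2 ≤ wrap (G - x) ^ 2 + lam * wrap (F - x) ^ 2) ∧
    (|G - F| ≠ Real.pi → ∀ x ∈ Set.Ico (-Real.pi) Real.pi,
      wrap (G - x) ^ 2 + lam * wrap (F - x) ^ 2 = wrap (G - xh) ^ 2 + lam * wrap (F - xh) ^ 2 →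
      x = xh) := by
  have hpi := Real.pi_pos
  have h1l : (0:ℝ) < 1 + lam := by linarith
  set s : ℝ := G - F with hs
  set w : ℝ := s - 2 * Real.pi * V with hwdef
  -- V is 0, 1 or -1, and bounds on w
  obtain ⟨dV, hdV, hwle, hwlt⟩ :
      ∃ dV : ℤ, (dV : ℝ) = V ∧ |w| ≤ Real.pi ∧ (|s| ≠ Real.pi → |w| < Real.pi) := by
    by_cases hc : |s| ≤ Real.pi
    · refine ⟨0, by simp [hV, hc], ?_, ?_⟩
      · simpa [hwdef, hV, hc] using hc
      · intro hne
        have : |w| = |s| := by simp [hwdef, hV, hc]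
        rw [this]; exact lt_of_le_of_ne hc hne
    · push_neg at hc
      have hs2 : s < 2 * Real.pi := by
        have := hG.2; have := hF.1; simp only [hs]; linarith
      have hs1 : -(2 * Real.pi) < s := by
        have := hG.1; have := hF.2; simp only [hs]; linarith
      rcases lt_or_ge 0 s with hpos | hneg
      · have hsgn : Real.sign s = 1 := Real.sign_of_pos hpos
        have hVval : V = 1 := by rw [hV, if_neg (not_le.mpr hc)]; exact hsgn
        have hsp : Real.pi < s := by
          rw [abs_of_pos hpos] at hc; exact hc
        have hw : w = s - 2 * Real.pi := by rw [hwdef, hVval]; ring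
        have : |w| < Real.pi := by
          rw [hw, abs_lt]; constructor <;> linarith
        exact ⟨1, by rw [hVval]; norm_num, le_of_lt this, fun _ => this⟩
      · have hsneg : s < 0 := by
          rcases lt_or_eq_of_le hneg with h | h
          · exact h
          · exfalso; rw [h] at hc; simp at hc; linarith
        have hsgn : Real.sign s = -1 := Real.sign_of_neg hsneg
        have hVval : V = -1 := by rw [hV, if_neg (not_le.mpr hc)]; exact hsgn
        have hsp : s < -Real.pi := by
          rw [abs_of_neg hsneg] at hc; linarith
        have hw : w = s + 2 * Real.pi := by rw [hwdef, hVval]; ring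
        have : |w| < Real.pi := by
          rw [hw, abs_lt]; constructor <;> linarith
        exact ⟨-1, by rw [hVval]; norm_num, le_of_lt this, fun _ => this⟩
  -- the wrapped residuals at xh
  obtain ⟨K, hK⟩ := wrap_sub_exists ((G + lam * F) / (1 + lam) + lam / (1 + lam) * (2 * Real.pi) * V)
  rw [← hxh] at hK
  have hGxh : wrap (G - xh) = lam / (1 + lam) * w := by
    have harg : G - xh = lam / (1 + lam) * w + 2 * Real.pi * K := by
      have : G - xh = G - ((G + lam * F) / (1 + lam) + lam / (1 + lam) * (2 * Real.pi) * V)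
          + 2 * Real.pi * K := by linarith [hK]
      rw [this, hwdef, hs]; field_simp; ring
    rw [harg, wrap_add_int]
    apply wrap_eq_self
    have hlt : |lam / (1 + lam) * w| < Real.pi := by
      rw [abs_mul, abs_of_pos (by positivity : (0:ℝ) < lam / (1 + lam))]
      have h2 : lam / (1 + lam) < 1 := by rw [div_lt_one h1l]; linarith
      have h3 : lam / (1 + lam) * |w| ≤ lam / (1 + lam) * Real.pi :=
        mul_le_mul_of_nonneg_left hwle (by positivity)
      nlinarith
    rw [abs_lt] at hlt
    exact ⟨le_of_lt hlt.1, hlt.2⟩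
  have hFxh : wrap (F - xh) = -(1 / (1 + lam)) * w := by
    have harg : F - xh = -(1 / (1 + lam)) * w + 2 * Real.pi * ((K - dV : ℤ) : ℝ) := by
      have : F - xh = F - ((G + lam * F) / (1 + lam) + lam / (1 + lam) * (2 * Real.pi) * V)
          + 2 * Real.pi * K := by linarith [hK]
      rw [this, hwdef, hs]; push_cast; rw [hdV]; field_simp; ring
    rw [harg, wrap_add_int]
    apply wrap_eq_self
    have hlt : |(-(1 / (1 + lam))) * w| < Real.pi := by
      rw [abs_mul]
      have : |(-(1 / (1 + lam)))| = 1 / (1 + lam) := by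
        rw [abs_neg, abs_of_pos (by positivity)]
      rw [this]
      have h2 : 1 / (1 + lam) < 1 := by rw [div_lt_one h1l]; linarith
      have h3 : 1 / (1 + lam) * |w| ≤ 1 / (1 + lam) * Real.pi :=
        mul_le_mul_of_nonneg_left hwle (by positivity)
      nlinarith
    rw [abs_lt] at hlt
    exact ⟨le_of_lt hlt.1, hlt.2⟩
  have hval : wrap (G - xh) ^ 2 + lam * wrap (F - xh) ^ 2 = lam / (1 + lam) * w ^ 2 := by
    rw [hGxh, hFxh]; field_simp; ring
  -- lower bound machinery for arbitrary x
  have hxIco : xh ∈ Set.Ico (-Real.pi) Real.pi := hxh ▸ wrap_mem_Ico _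
  constructor
  · intro x hx
    obtain ⟨kk, hkk⟩ := wrap_sub_exists (G - x)
    obtain ⟨ll, hll⟩ := wrap_sub_exists (F - x)
    set a := wrap (G - x)
    set b := wrap (F - x)
    have hab : a - b = w + 2 * Real.pi * ((dV : ℝ) - kk + ll) := by
      rw [hwdef, hs, hdV]; linarith [hkk, hll]
    have habZ : a - b = w + 2 * Real.pi * ((dV - kk + ll : ℤ) : ℝ) := by
      rw [hab]; push_cast; ring
    have h1 : w ^ 2 ≤ (a - b) ^ 2 := by
      rw [habZ]; exact sq_le_sq_shift hwle _
    have h2 : lam / (1 + lam) * (a - b) ^ 2 ≤ a ^ 2 + lam * b ^ 2 := by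
      rw [div_mul_eq_mul_div, div_le_iff₀ h1l]
      nlinarith [sq_nonneg (a + lam * b)]
    rw [hval]
    calc lam / (1 + lam) * w ^ 2 ≤ lam / (1 + lam) * (a - b) ^ 2 := by
          apply mul_le_mul_of_nonneg_left h1 (by positivity)
      _ ≤ a ^ 2 + lam * b ^ 2 := h2
  · intro hne x hx heq
    have hwlt' := hwlt hne
    obtain ⟨kk, hkk⟩ := wrap_sub_exists (G - x)
    obtain ⟨ll, hll⟩ := wrap_sub_exists (F - x)
    set a := wrap (G - x) with ha
    set b := wrap (F - x) with hb
    have hab : a - b = w + 2 * Real.pi * ((dV - kk + ll : ℤ) : ℝ) := by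
      push_cast; rw [hdV, hwdef, hs]; linarith [hkk, hll]
    have h1 : w ^ 2 ≤ (a - b) ^ 2 := by rw [hab]; exact sq_le_sq_shift hwle _
    have h2 : lam / (1 + lam) * (a - b) ^ 2 ≤ a ^ 2 + lam * b ^ 2 := by
      rw [div_mul_eq_mul_div, div_le_iff₀ h1l]
      nlinarith [sq_nonneg (a + lam * b)]
    rw [hval] at heq
    -- equality forces (a-b)^2 = w^2 and a + lam b = 0
    have he0 : (dV - kk + ll : ℤ) = 0 := by
      by_contra h0
      have := sq_lt_sq_shift hwlt' h0
      rw [← hab] at this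
      have : lam / (1 + lam) * w ^ 2 < lam / (1 + lam) * (a - b) ^ 2 :=
        mul_lt_mul_of_pos_left this (by positivity)
      linarith
    have habw : a - b = w := by rw [hab, he0]; push_cast; ring
    have hsum : a + lam * b = 0 := by
      have h3 : lam / (1 + lam) * (a - b) ^ 2 = a ^ 2 + lam * b ^ 2 := by
        rw [habw]; linarith [heq]
      have h4 : (a + lam * b) ^ 2 = 0 := by
        rw [div_mul_eq_mul_div, div_eq_iff (ne_of_gt h1l)] at h3
        nlinarith
      exact pow_eq_zero_iff (by norm_num) |>.mp h4
    have haval : a = lam / (1 + lam) * w := by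
      field_simp
      linear_combination hsum + lam * habw
    obtain ⟨K2, hK2⟩ := wrap_sub_exists (G - xh)
    rw [hGxh] at hK2
    have hxxh : x - xh = 2 * Real.pi * ((K2 - kk : ℤ) : ℝ) := by
      push_cast
      have e1 : G - x - a = 2 * Real.pi * kk := hkk
      rw [haval] at e1
      linarith [hK2, e1]
    exact eq_of_Ico_sub_int hx hxIco _ hxxh

lemma lin_key (lam : ℝ) (h1l : (0:ℝ) < 1 + lam) (G F x : ℝ) :
    (G - x) ^ 2 + lam * (F - x) ^ 2 =
      (1 + lam) * (x - (G + lam * F) / (1 + lam)) ^ 2 +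
        ((G - (G + lam * F) / (1 + lam)) ^ 2 + lam * (F - (G + lam * F) / (1 + lam)) ^ 2) := by
  field_simp
  ring

lemma lin_le (lam : ℝ) (hlam : 0 < lam) (G F x : ℝ) :
    (G - (G + lam * F) / (1 + lam)) ^ 2 + lam * (F - (G + lam * F) / (1 + lam)) ^ 2 ≤
      (G - x) ^ 2 + lam * (F - x) ^ 2 := by
  have h1l : (0:ℝ) < 1 + lam := by linarith
  have hkey := lin_key lam h1l G F x
  nlinarith [sq_nonneg (x - (G + lam * F) / (1 + lam))]

lemma lin_eq (lam : ℝ) (hlam : 0 < lam) (G F x : ℝ)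
    (h : (G - x) ^ 2 + lam * (F - x) ^ 2 =
      (G - (G + lam * F) / (1 + lam)) ^ 2 + lam * (F - (G + lam * F) / (1 + lam)) ^ 2) :
    x = (G + lam * F) / (1 + lam) := by
  have h1l : (0:ℝ) < 1 + lam := by linarith
  have hkey := lin_key lam h1l G F x
  have h2 : (x - (G + lam * F) / (1 + lam)) ^ 2 = 0 := by nlinarith
  have h3 := pow_eq_zero_iff (two_ne_zero) |>.mp h2
  linarith

lemma sum_comb {α : Type*} [Fintype α] (lam : ℝ) (a b : α → ℝ) :
    (∑ j, a j) + lam * (∑ j, b j) = ∑ j, (a j + lam * b j) := by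
  rw [Finset.mul_sum, ← Finset.sum_add_distrib]


set_option maxHeartbeats 1000000 in
/-- **Proposition 3.4 (proximal mapping of the data term).**
For `f, g ∈ 𝒳^k` and `λ > 0`, the point `x̂` with components
`x̂^{(i)} = ((g^{(i)} + λf^{(i)})/(1+λ) + (λ/(1+λ))·2π v^{(i)})_𝒳` minimizes
`ℰ(x) = Σᵢ d_𝒳(g^{(i)},x^{(i)})² + λ d_𝒳(f^{(i)},x^{(i)})²` over `𝒳^k`; it is the unique
minimizer whenever `|g^{(i)}_j − f^{(i)}_j| ≠ π` for all `i` and all cyclic components `j`. -/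
theorem data_term_prox_minimizer
    (m n k : ℕ) (lam : ℝ) (hlam : 0 < lam)
    (f g : Fin k → Pt m n)
    (hf : ∀ i j, (f i).1 j ∈ Set.Ico (-Real.pi) Real.pi)
    (hg : ∀ i j, (g i).1 j ∈ Set.Ico (-Real.pi) Real.pi)
    (En : (Fin k → Pt m n) → ℝ)
    (hEn : ∀ x, En x = ∑ i, (dX (g i) (x i) ^ 2 + lam * dX (f i) (x i) ^ 2))
    (v : Fin k → Fin m → ℝ)
    (hv : ∀ i j, v i j = if |(g i).1 j - (f i).1 j| ≤ Real.pi then 0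
        else Real.sign ((g i).1 j - (f i).1 j))
    (xhat : Fin k → Pt m n)
    (hxhat : ∀ i, xhat i =
      ((fun j => wrap (((g i).1 j + lam * (f i).1 j) / (1 + lam)
          + lam / (1 + lam) * (2 * Real.pi) * v i j)),
       (fun j => ((g i).2 j + lam * (f i).2 j) / (1 + lam)))) :
    ((∀ i j, (xhat i).1 j ∈ Set.Ico (-Real.pi) Real.pi) ∧
      ∀ x : Fin k → Pt m n,
        (∀ i j, (x i).1 j ∈ Set.Ico (-Real.pi) Real.pi) → En xhat ≤ En x) ∧
    ((∀ i j, |(g i).1 j - (f i).1 j| ≠ Real.pi) →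
      ∀ x : Fin k → Pt m n,
        (∀ i j, (x i).1 j ∈ Set.Ico (-Real.pi) Real.pi) →
        En x = En xhat → x = xhat) := by
  have h1l : (0:ℝ) < 1 + lam := by linarith
  have hdX : ∀ (y z : Pt m n), dX y z ^ 2 =
      (∑ j, wrap (y.1 j - z.1 j) ^ 2) + ∑ j, (y.2 j - z.2 j) ^ 2 := by
    intro y z
    rw [dX, Real.sq_sqrt (by positivity)]
  -- rewrite En coordinatewise
  have hEn' : ∀ x : Fin k → Pt m n, En x = ∑ i,
      ((∑ j, (wrap ((g i).1 j - (x i).1 j) ^ 2 + lam * wrap ((f i).1 j - (x i).1 j) ^ 2)) +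
       ∑ j, (((g i).2 j - (x i).2 j) ^ 2 + lam * ((f i).2 j - (x i).2 j) ^ 2)) := by
    intro x
    rw [hEn]
    refine Finset.sum_congr rfl fun i _ => ?_
    rw [hdX, hdX,
      ← sum_comb lam (fun j => wrap ((g i).1 j - (x i).1 j) ^ 2)
        (fun j => wrap ((f i).1 j - (x i).1 j) ^ 2),
      ← sum_comb lam (fun j => ((g i).2 j - (x i).2 j) ^ 2)
        (fun j => ((f i).2 j - (x i).2 j) ^ 2)]
    ring
  -- per-coordinate facts
  have hxh1 : ∀ i j, (xhat i).1 j = wrap (((g i).1 j + lam * (f i).1 j) / (1 + lam)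
      + lam / (1 + lam) * (2 * Real.pi) * v i j) := by
    intro i j; rw [hxhat i]
  have hxh2 : ∀ i j, (xhat i).2 j = ((g i).2 j + lam * (f i).2 j) / (1 + lam) := by
    intro i j; rw [hxhat i]
  have hcyc := fun i j => cyclic1D lam hlam ((g i).1 j) ((f i).1 j) (hg i j) (hf i j)
      (v i j) (hv i j) ((xhat i).1 j) (hxh1 i j)
  have hxhatIco : ∀ i j, (xhat i).1 j ∈ Set.Ico (-Real.pi) Real.pi := by
    intro i j; rw [hxh1 i j]; exact wrap_mem_Ico _
  -- termwise inequalities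
  have hcycle : ∀ (x : Fin k → Pt m n), (∀ i j, (x i).1 j ∈ Set.Ico (-Real.pi) Real.pi) →
      ∀ i j, wrap ((g i).1 j - (xhat i).1 j) ^ 2 + lam * wrap ((f i).1 j - (xhat i).1 j) ^ 2 ≤
        wrap ((g i).1 j - (x i).1 j) ^ 2 + lam * wrap ((f i).1 j - (x i).1 j) ^ 2 := by
    intro x hx i j
    exact (hcyc i j).1 ((x i).1 j) (hx i j)
  have hlinle : ∀ (x : Fin k → Pt m n), ∀ i j,
      ((g i).2 j - (xhat i).2 j) ^ 2 + lam * ((f i).2 j - (xhat i).2 j) ^ 2 ≤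
        ((g i).2 j - (x i).2 j) ^ 2 + lam * ((f i).2 j - (x i).2 j) ^ 2 := by
    intro x i j
    rw [hxh2 i j]
    exact lin_le lam hlam _ _ _
  have hTle : ∀ (x : Fin k → Pt m n), (∀ i j, (x i).1 j ∈ Set.Ico (-Real.pi) Real.pi) →
      ∀ i : Fin k,
      ((∑ j, (wrap ((g i).1 j - (xhat i).1 j) ^ 2 + lam * wrap ((f i).1 j - (xhat i).1 j) ^ 2)) +
       ∑ j, (((g i).2 j - (xhat i).2 j) ^ 2 + lam * ((f i).2 j - (xhat i).2 j) ^ 2)) ≤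
      ((∑ j, (wrap ((g i).1 j - (x i).1 j) ^ 2 + lam * wrap ((f i).1 j - (x i).1 j) ^ 2)) +
       ∑ j, (((g i).2 j - (x i).2 j) ^ 2 + lam * ((f i).2 j - (x i).2 j) ^ 2)) := by
    intro x hx i
    exact add_le_add (Finset.sum_le_sum fun j _ => hcycle x hx i j)
      (Finset.sum_le_sum fun j _ => hlinle x i j)
  refine ⟨⟨hxhatIco, ?_⟩, ?_⟩
  · intro x hx
    rw [hEn' x, hEn' xhat]
    exact Finset.sum_le_sum fun i _ => hTle x hx i
  · intro hne x hx heq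
    rw [hEn' x, hEn' xhat] at heq
    have hTeq := (Finset.sum_eq_sum_iff_of_le (fun i _ => hTle x hx i)).mp heq.symm
    have hcoord : ∀ i : Fin k,
        (∀ j, wrap ((g i).1 j - (x i).1 j) ^ 2 + lam * wrap ((f i).1 j - (x i).1 j) ^ 2 =
          wrap ((g i).1 j - (xhat i).1 j) ^ 2 + lam * wrap ((f i).1 j - (xhat i).1 j) ^ 2) ∧
        (∀ j, ((g i).2 j - (x i).2 j) ^ 2 + lam * ((f i).2 j - (x i).2 j) ^ 2 =
          ((g i).2 j - (xhat i).2 j) ^ 2 + lam * ((f i).2 j - (xhat i).2 j) ^ 2) := by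
      intro i
      have hti := hTeq i (Finset.mem_univ i)
      have hc1 : (∑ j, (wrap ((g i).1 j - (xhat i).1 j) ^ 2 +
            lam * wrap ((f i).1 j - (xhat i).1 j) ^ 2)) ≤
          ∑ j, (wrap ((g i).1 j - (x i).1 j) ^ 2 + lam * wrap ((f i).1 j - (x i).1 j) ^ 2) :=
        Finset.sum_le_sum fun j _ => hcycle x hx i j
      have hc2 : (∑ j, (((g i).2 j - (xhat i).2 j) ^ 2 + lam * ((f i).2 j - (xhat i).2 j) ^ 2)) ≤
          ∑ j, (((g i).2 j - (x i).2 j) ^ 2 + lam * ((f i).2 j - (x i).2 j) ^ 2) :=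
        Finset.sum_le_sum fun j _ => hlinle x i j
      have he1 : (∑ j, (wrap ((g i).1 j - (xhat i).1 j) ^ 2 +
            lam * wrap ((f i).1 j - (xhat i).1 j) ^ 2)) =
          ∑ j, (wrap ((g i).1 j - (x i).1 j) ^ 2 + lam * wrap ((f i).1 j - (x i).1 j) ^ 2) := by
        linarith
      have he2 : (∑ j, (((g i).2 j - (xhat i).2 j) ^ 2 + lam * ((f i).2 j - (xhat i).2 j) ^ 2)) =
          ∑ j, (((g i).2 j - (x i).2 j) ^ 2 + lam * ((f i).2 j - (x i).2 j) ^ 2) := by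
        linarith
      constructor
      · intro j
        exact ((Finset.sum_eq_sum_iff_of_le (fun j _ => hcycle x hx i j)).mp he1 j
          (Finset.mem_univ j)).symm
      · intro j
        exact ((Finset.sum_eq_sum_iff_of_le (fun j _ => hlinle x i j)).mp he2 j
          (Finset.mem_univ j)).symm
    funext i
    have hfst : (x i).1 = (xhat i).1 := by
      funext j
      exact (hcyc i j).2 (hne i j) ((x i).1 j) (hx i j) ((hcoord i).1 j)
    have hsnd : (x i).2 = (xhat i).2 := by
      funext j
      have := (hcoord i).2 j
      rw [hxh2 i j] at this ⊢
      exact lin_eq lam hlam _ _ _ this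
    exact Prod.ext hfst hsnd
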